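/- arXiv:nucl-th/0411059 — 5 statements merged into one kernel-verified Lean document; each statement's English description precedes it below -/
import Mathlib

section
/- Let A, B : V → V be linear operators on a finite-dimensional space V, with A diagonalizable with non-degenerate spectrum, eigenvectors |φ_i⟩ and dual functionals ⟨ψ_i| satisfying ⟨ψ_i|φ_j⟩ = δ_ij. Define B_{ji} = ⟨ψ_i|B|φ_j⟩. If W is a subspace invariant under both A and B containing |φ_j⟩, and B_{ji} ≠ 0, then |φ_i⟩ ∈ W. -/
/-!
Projecting with the Lagrange interpolation polynomial of the spectrum at `λ_i` kills every
eigencomponent except the `i`-th, and as a polynomial in `A` it preserves `W`. Applied to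
`B φ_j ∈ W`, whose `i`-th component is `B_{ji} φ_i ≠ 0`, it puts a nonzero multiple of `φ_i` in `W`.
-/

open Polynomial

section

variable {R M : Type*} [CommSemiring R] [AddCommMonoid M] [Module R M]

lemma Module.End.aeval_apply_mem_of_forall_mem {f : Module.End R M} {W : Submodule R M}
    (hW : ∀ w ∈ W, f w ∈ W) (p : R[X]) {w : M} (hw : w ∈ W) : aeval f p w ∈ W := by
  induction p using Polynomial.induction_on with
  | C a => simpa [Module.algebraMap_end_apply] using W.smul_mem a hw
  | add p q hp hq => simpa using W.add_mem hp hq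
  | monomial n a ih =>
    rw [pow_succ', mul_left_comm, map_mul, aeval_X, Module.End.mul_apply]
    exact hW _ ih

end

section

variable {K V : Type*} [Field K] [AddCommGroup V] [Module K V]

lemma Module.End.aeval_apply_of_apply_eq_smul {f : Module.End K V} {μ : K} {x : V}
    (h : f x = μ • x) (p : K[X]) : aeval f p x = p.eval μ • x := by
  rcases eq_or_ne x 0 with rfl | hx
  · simp
  · exact aeval_apply_of_hasEigenvector ⟨Module.End.mem_eigenspace_iff.2 h, hx⟩

variable {ι : Type*} [Fintype ι] [DecidableEq ι] {f : Module.End K V} {φ : ι → V} {lam : ι → K}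

lemma Module.End.aeval_lagrangeBasis_sum_smul_eigenvectors (heig : ∀ k, f (φ k) = lam k • φ k)
    (hlam : Function.Injective lam) (c : ι → K) (i : ι) :
    aeval f (Lagrange.basis Finset.univ lam i) (∑ k, c k • φ k) = c i • φ i := by
  simp only [map_sum, map_smul, Module.End.aeval_apply_of_apply_eq_smul (heig _), smul_smul]
  refine (Finset.sum_eq_single i (fun k _ hki => ?_) (by simp)).trans ?_
  · rw [Lagrange.eval_basis_of_ne hki.symm (Finset.mem_univ k), mul_zero, zero_smul]
  · rw [Lagrange.eval_basis_self hlam.injOn (Finset.mem_univ i), mul_one]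

lemma Module.End.eigenvector_mem_of_sum_smul_mem (heig : ∀ k, f (φ k) = lam k • φ k)
    (hlam : Function.Injective lam) {W : Submodule K V} (hW : ∀ w ∈ W, f w ∈ W) {c : ι → K}
    (hc : ∑ k, c k • φ k ∈ W) {i : ι} (hi : c i ≠ 0) : φ i ∈ W := by
  have hproj := Module.End.aeval_apply_mem_of_forall_mem hW (Lagrange.basis Finset.univ lam i) hc
  rw [Module.End.aeval_lagrangeBasis_sum_smul_eigenvectors heig hlam] at hproj
  exact (W.smul_mem_iff hi).1 hproj

end

theorem stmt1_general {V : Type*} [AddCommGroup V] [Module ℂ V]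
    {M : ℕ} (A B : V →ₗ[ℂ] V) (φ : Fin M → V) (lam : Fin M → ℂ)
    (ψd : Fin M → (V →ₗ[ℂ] ℂ))
    (hspan : ∀ v : V, ∃ c : Fin M → ℂ, v = ∑ k, c k • φ k)
    (heig : ∀ i, A (φ i) = lam i • φ i)
    (hdistinct : Function.Injective lam)
    (hdual : ∀ i j, ψd i (φ j) = if i = j then 1 else 0)
    (W : Submodule ℂ V) (hWA : ∀ w ∈ W, A w ∈ W) (hWB : ∀ w ∈ W, B w ∈ W)
    (i j : Fin M) (hj : φ j ∈ W) (hBji : ψd i (B (φ j)) ≠ 0) :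
    φ i ∈ W := by
  obtain ⟨c, hc⟩ := hspan (B (φ j))
  have hci : c i = ψd i (B (φ j)) := by simp [hc, hdual]
  exact Module.End.eigenvector_mem_of_sum_smul_mem heig hdistinct hWA (hc ▸ hWB _ hj)
    (hci ▸ hBji)

/-- If W is invariant under both A (diagonalizable, non-degenerate spectrum, eigenvectors φ,
dual functionals ψd) and B, contains φ j, and B_{ji} = ψd i (B (φ j)) ≠ 0, then φ i ∈ W. -/
theorem stmt1 {V : Type*} [AddCommGroup V] [Module ℂ V] [FiniteDimensional ℂ V]
    {M : ℕ} (A B : V →ₗ[ℂ] V) (φ : Fin M → V) (lam : Fin M → ℂ)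
    (ψd : Fin M → (V →ₗ[ℂ] ℂ))
    (hspan : ∀ v : V, ∃ c : Fin M → ℂ, v = ∑ k, c k • φ k)
    (hindep : LinearIndependent ℂ φ)
    (heig : ∀ i, A (φ i) = lam i • φ i)
    (hdistinct : Function.Injective lam)
    (hdual : ∀ i j, ψd i (φ j) = if i = j then 1 else 0)
    (W : Submodule ℂ V) (hWA : ∀ w ∈ W, A w ∈ W) (hWB : ∀ w ∈ W, B w ∈ W)
    (i j : Fin M) (hj : φ j ∈ W) (hBji : ψd i (B (φ j)) ≠ 0) :
    φ i ∈ W :=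
  stmt1_general A B φ lam ψd hspan heig hdistinct hdual W hWA hWB i j hj hBji
end

section
/- Let χ^i_{μν} (i = 1,…,M; μ,ν = 1,…,Ω) be complex numbers antisymmetric in μ,ν, with χ_i^{μν} = (χ^i_{μν})*, satisfying the orthogonality condition (1/2) χ_i^{μν} χ^j_{μν} = g δ_i^j with g > 0, and suppose coefficients C_{ik}^{jl} solve χ_i^{μρ} χ^j_{λρ} χ_k^{λη} = (1/2) C_{ik}^{jl} χ_l^{μη}. Then C_{ik}^{jl} = (1/g) χ_i^{μρ} χ^j_{λρ} χ_k^{λη} χ^l_{μη}, and C is symmetric in its lower pair of indices and in its upper pair of indices: C_{ik}^{jl} = C_{ki}^{jl} = C_{ik}^{lj}. -/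
open Finset

private lemma cyc3 {α β γ : Type*} [Fintype α] [Fintype β] [Fintype γ]
    (f : α → β → γ → ℂ) :
    ∑ a, ∑ b, ∑ c, f a b c = ∑ c, ∑ a, ∑ b, f a b c := by
  calc ∑ a, ∑ b, ∑ c, f a b c
      = ∑ a, ∑ c, ∑ b, f a b c := Finset.sum_congr rfl fun a _ => Finset.sum_comm
    _ = ∑ c, ∑ a, ∑ b, f a b c := Finset.sum_comm

private lemma perm4 {Om : ℕ} (f : Fin Om → Fin Om → Fin Om → Fin Om → ℂ) :
    ∑ a, ∑ b, ∑ c, ∑ d, f a b c d = ∑ c, ∑ d, ∑ a, ∑ b, f a b c d := by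
  calc ∑ a, ∑ b, ∑ c, ∑ d, f a b c d
      = ∑ a, ∑ c, ∑ b, ∑ d, f a b c d :=
        Finset.sum_congr rfl fun a _ => Finset.sum_comm
    _ = ∑ c, ∑ a, ∑ b, ∑ d, f a b c d := Finset.sum_comm
    _ = ∑ c, ∑ a, ∑ d, ∑ b, f a b c d :=
        Finset.sum_congr rfl fun c _ => Finset.sum_congr rfl fun a _ => Finset.sum_comm
    _ = ∑ c, ∑ d, ∑ a, ∑ b, f a b c d :=
        Finset.sum_congr rfl fun c _ => Finset.sum_comm

/-- Explicit formula and symmetry of the structure constants C_{ik}^{jl} determined by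
the antisymmetric orthogonal arrays χ. -/
theorem stmt10 {M Om : ℕ} (χhi χlo : Fin M → Fin Om → Fin Om → ℂ)
    -- χhi i μ ν  stands for  χ^i_{μν} ;  χlo i μ ν  stands for  χ_i^{μν}
    (hanti : ∀ i μ ν, χhi i ν μ = - χhi i μ ν)
    (hconj : ∀ i μ ν, χlo i μ ν = starRingEnd ℂ (χhi i μ ν))
    (g : ℝ) (hg : 0 < g)
    (horth : ∀ i j, (1/2 : ℂ) * ∑ μ, ∑ ν, χlo i μ ν * χhi j μ ν
      = if i = j then (g : ℂ) else 0)
    (C : Fin M → Fin M → Fin M → Fin M → ℂ)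
    -- C i k j l  stands for  C_{ik}^{jl}
    (hclosure : ∀ i j k μ η, ∑ ρ, ∑ lam, χlo i μ ρ * χhi j lam ρ * χlo k lam η
      = (1/2 : ℂ) * ∑ l, C i k j l * χlo l μ η) :
    (∀ i j k l, C i k j l = (1/(g:ℂ)) * ∑ μ, ∑ ρ, ∑ lam, ∑ η,
        χlo i μ ρ * χhi j lam ρ * χlo k lam η * χhi l μ η) ∧
    (∀ i j k l, C i k j l = C k i j l ∧ C i k j l = C i k l j) := by
  have hg' : (g : ℂ) ≠ 0 := by exact_mod_cast (ne_of_gt hg)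
  have hanti' : ∀ i μ ν, χlo i ν μ = - χlo i μ ν := by
    intro i μ ν
    rw [hconj, hconj, hanti, map_neg]
  set T : Fin M → Fin M → Fin M → Fin Om → Fin Om → ℂ :=
    fun i j k μ η => ∑ ρ, ∑ lam, χlo i μ ρ * χhi j lam ρ * χlo k lam η with hT
  set S : Fin M → Fin M → Fin M → Fin M → ℂ :=
    fun i j k l => ∑ μ, ∑ ρ, ∑ lam, ∑ η,
        χlo i μ ρ * χhi j lam ρ * χlo k lam η * χhi l μ η with hSdef
  have hS : ∀ i j k l, S i j k l = ∑ μ, ∑ η, T i j k μ η * χhi l μ η := by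
    intro i j k l
    simp only [hSdef, hT, Finset.sum_mul]
    refine Finset.sum_congr rfl fun μ _ => ?_
    exact cyc3 (fun ρ lam η => χlo i μ ρ * χhi j lam ρ * χlo k lam η * χhi l μ η)
  have hkey : ∀ i j k l, S i j k l = (g : ℂ) * C i k j l := by
    intro i j k l
    rw [hS]
    calc ∑ μ, ∑ η, T i j k μ η * χhi l μ η
        = ∑ μ, ∑ η, ∑ m, C i k j m * ((1/2 : ℂ) * (χlo m μ η * χhi l μ η)) := by
          refine Finset.sum_congr rfl fun μ _ => Finset.sum_congr rfl fun η _ => ?_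
          simp only [hT]
          rw [hclosure i j k μ η, Finset.mul_sum, Finset.sum_mul]
          exact Finset.sum_congr rfl fun m _ => by ring
      _ = ∑ m, ∑ μ, ∑ η, C i k j m * ((1/2 : ℂ) * (χlo m μ η * χhi l μ η)) :=
          cyc3 (fun μ η m => C i k j m * ((1/2 : ℂ) * (χlo m μ η * χhi l μ η)))
      _ = ∑ m, C i k j m * ((1/2 : ℂ) * ∑ μ, ∑ η, χlo m μ η * χhi l μ η) := by
          refine Finset.sum_congr rfl fun m _ => ?_
          simp only [Finset.mul_sum]
      _ = ∑ m, C i k j m * (if m = l then (g : ℂ) else 0) := by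
          refine Finset.sum_congr rfl fun m _ => ?_
          rw [horth m l]
      _ = (g : ℂ) * C i k j l := by
          rw [Finset.sum_congr rfl (fun m _ => mul_ite (m = l) (C i k j m) (g:ℂ) 0)]
          simp [Finset.sum_ite_eq', mul_comm]
  have hT1 : ∀ i j k μ η, T i j k η μ = - T i j k μ η := by
    intro i j k μ η
    rw [hT]
    simp only
    rw [hclosure, hclosure, Finset.mul_sum, Finset.mul_sum, ← Finset.sum_neg_distrib]
    refine Finset.sum_congr rfl fun m _ => ?_
    rw [hanti' m μ η]
    ring
  have hT2 : ∀ i j k μ η, T i j k η μ = - T k j i μ η := by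
    intro i j k μ η
    rw [hT]
    simp only
    have h : (∑ ρ, ∑ lam, χlo i η ρ * χhi j lam ρ * χlo k lam μ)
        = ∑ ρ, ∑ lam, -(χlo i ρ η * χhi j ρ lam * χlo k μ lam) := by
      refine Finset.sum_congr rfl fun ρ _ => Finset.sum_congr rfl fun lam _ => ?_
      rw [hanti' i η ρ, hanti j ρ lam, hanti' k μ lam]
      ring
    rw [h, Finset.sum_comm, ← Finset.sum_neg_distrib]
    refine Finset.sum_congr rfl fun ρ _ => ?_
    rw [← Finset.sum_neg_distrib]
    refine Finset.sum_congr rfl fun lam _ => ?_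
    ring
  have hTsym : ∀ i j k μ η, T i j k μ η = T k j i μ η := by
    intro i j k μ η
    have h2 := hT2 k j i η μ
    rw [hT1 i j k μ η] at h2
    simpa using h2.symm
  have hSlow : ∀ i j k l, S i j k l = S k j i l := by
    intro i j k l
    rw [hS, hS]
    exact Finset.sum_congr rfl fun μ _ => Finset.sum_congr rfl fun η _ => by
      rw [hTsym i j k μ η]
  have hSup : ∀ i j k l, S i l k j = S k j i l := by
    intro i j k l
    rw [hSdef]
    simp only
    calc ∑ μ, ∑ ρ, ∑ lam, ∑ η, χlo i μ ρ * χhi l lam ρ * χlo k lam η * χhi j μ η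
        = ∑ lam, ∑ η, ∑ μ, ∑ ρ, χlo i μ ρ * χhi l lam ρ * χlo k lam η * χhi j μ η :=
          perm4 (fun μ ρ lam η => χlo i μ ρ * χhi l lam ρ * χlo k lam η * χhi j μ η)
      _ = ∑ μ, ∑ ρ, ∑ lam, ∑ η, χlo k μ ρ * χhi j lam ρ * χlo i lam η * χhi l μ η := by
          refine Finset.sum_congr rfl fun μ _ => Finset.sum_congr rfl fun ρ _ =>
            Finset.sum_congr rfl fun lam _ => Finset.sum_congr rfl fun η _ => ?_
          ring
  have hCsymlow : ∀ i j k l, C i k j l = C k i j l := by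
    intro i j k l
    have h := hSlow i j k l
    rw [hkey i j k l, hkey k j i l] at h
    exact mul_left_cancel₀ hg' h
  refine ⟨fun i j k l => ?_, fun i j k l => ⟨hCsymlow i j k l, ?_⟩⟩
  · show C i k j l = 1/(g:ℂ) * S i j k l
    rw [hkey i j k l, one_div, inv_mul_cancel_left₀ hg']
  · have h := hSup i j k l
    rw [hkey i l k j, hkey k j i l] at h
    have := mul_left_cancel₀ hg' h
    rw [this, ← hCsymlow i j k l]
end

section
/- With the structure constants C_{ik}^{jl} defined by C_{ik}^{jl} = (1/g) χ_i^{μρ} χ^j_{λρ} χ_k^{λη} χ^l_{μη} and satisfying χ_i^{μρ} χ^j_{λρ} χ_k^{λη} = (1/2) C_{ik}^{jl} χ_l^{μη} together with the symmetry C_{ik}^{jl} = C_{ki}^{jl} = C_{ik}^{lj}, the quadratic identity C_{ik}^{jl} C_{ln}^{mp} = C_{nk}^{pl} C_{li}^{mj} holds. -/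
private lemma rot2 {α β : Type*} [Fintype α] [Fintype β] (f : α → β → ℂ) :
    ∑ x, ∑ y, f x y = ∑ y, ∑ x, f x y := Finset.sum_comm

private lemma rot3 {α β γ : Type*} [Fintype α] [Fintype β] [Fintype γ]
    (f : α → β → γ → ℂ) :
    ∑ x, ∑ y, ∑ z, f x y z = ∑ y, ∑ z, ∑ x, f x y z := by
  rw [rot2]
  exact Finset.sum_congr rfl fun y _ => rot2 _

private lemma rot4 {α β γ δ : Type*} [Fintype α] [Fintype β] [Fintype γ] [Fintype δ]
    (f : α → β → γ → δ → ℂ) :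
    ∑ x, ∑ y, ∑ z, ∑ w, f x y z w = ∑ y, ∑ z, ∑ w, ∑ x, f x y z w := by
  rw [rot2]
  exact Finset.sum_congr rfl fun y _ => rot3 _

private lemma rot5 {α β γ δ ε : Type*} [Fintype α] [Fintype β] [Fintype γ] [Fintype δ]
    [Fintype ε] (f : α → β → γ → δ → ε → ℂ) :
    ∑ x, ∑ y, ∑ z, ∑ w, ∑ v, f x y z w v = ∑ y, ∑ z, ∑ w, ∑ v, ∑ x, f x y z w v := by
  rw [rot2]
  exact Finset.sum_congr rfl fun y _ => rot4 _

set_option maxHeartbeats 1600000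

/-- The quadratic identity C_{ik}^{jl} C_{ln}^{mp} = C_{nk}^{pl} C_{li}^{mj}
(summation over l) for the structure constants. -/
theorem stmt11 {M Om : ℕ} (χhi χlo : Fin M → Fin Om → Fin Om → ℂ)
    (hanti : ∀ i μ ν, χhi i ν μ = - χhi i μ ν)
    (hconj : ∀ i μ ν, χlo i μ ν = starRingEnd ℂ (χhi i μ ν))
    (g : ℝ) (hg : 0 < g)
    (horth : ∀ i j, (1/2 : ℂ) * ∑ μ, ∑ ν, χlo i μ ν * χhi j μ ν
      = if i = j then (g : ℂ) else 0)
    (C : Fin M → Fin M → Fin M → Fin M → ℂ)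
    -- C i k j l  stands for  C_{ik}^{jl}
    (hclosure : ∀ i j k μ η, ∑ ρ, ∑ lam, χlo i μ ρ * χhi j lam ρ * χlo k lam η
      = (1/2 : ℂ) * ∑ l, C i k j l * χlo l μ η)
    (hform : ∀ i j k l, C i k j l = (1/(g:ℂ)) * ∑ μ, ∑ ρ, ∑ lam, ∑ η,
        χlo i μ ρ * χhi j lam ρ * χlo k lam η * χhi l μ η)
    (hsym : ∀ i j k l, C i k j l = C k i j l ∧ C i k j l = C i k l j) :
    ∀ i j k m n p, ∑ l, C i k j l * C l n m p = ∑ l, C n k p l * C l i m j := by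
  have hgc : (g : ℂ) ≠ 0 := by
    exact_mod_cast ne_of_gt hg
  have hformg : ∀ i j k l, (g:ℂ) * C i k j l = ∑ μ, ∑ ρ, ∑ lam, ∑ η,
      χlo i μ ρ * χhi j lam ρ * χlo k lam η * χhi l μ η := by
    intro i j k l
    rw [hform i j k l]
    field_simp
  have hclos2 : ∀ i j k μ η, ∑ l, C i k j l * χlo l μ η
      = 2 * ∑ ρ, ∑ lam, χlo i μ ρ * χhi j lam ρ * χlo k lam η := by
    intro i j k μ η
    rw [hclosure i j k μ η]
    ring
  -- the key contraction identity
  have key : ∀ a b c d e f, ∑ l, C a c b l * C l e d f = ∑ q, C c e d q * C a q b f := by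
    intro a b c d e f
    apply mul_left_cancel₀ hgc
    calc (g:ℂ) * ∑ l, C a c b l * C l e d f
        = ∑ l, C a c b l * ((g:ℂ) * C l e d f) := by
          rw [Finset.mul_sum]; exact Finset.sum_congr rfl fun l _ => by ring
      _ = ∑ l, C a c b l * (∑ μ, ∑ ρ, ∑ lam, ∑ η,
            χlo l μ ρ * χhi d lam ρ * χlo e lam η * χhi f μ η) :=
          Finset.sum_congr rfl fun l _ => by rw [hformg l d e f]
      _ = ∑ μ, ∑ ρ, ∑ lam, ∑ η, (∑ l, C a c b l * χlo l μ ρ) *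
            (χhi d lam ρ * χlo e lam η * χhi f μ η) := by
          simp only [Finset.mul_sum, Finset.sum_mul]
          rw [rot5]
          exact Finset.sum_congr rfl fun _ _ => Finset.sum_congr rfl fun _ _ =>
            Finset.sum_congr rfl fun _ _ => Finset.sum_congr rfl fun _ _ =>
            Finset.sum_congr rfl fun _ _ => by ring
      _ = ∑ μ, ∑ ρ, ∑ lam, ∑ η,
            (2 * ∑ ρ2, ∑ lam2, χlo a μ ρ2 * χhi b lam2 ρ2 * χlo c lam2 ρ) *
            (χhi d lam ρ * χlo e lam η * χhi f μ η) := by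
          simp only [hclos2]
      _ = ∑ μ, ∑ ρ2, ∑ lam2, ∑ η, (χlo a μ ρ2 * χhi b lam2 ρ2) *
            ((2 * ∑ ρ, ∑ lam, χlo c lam2 ρ * χhi d lam ρ * χlo e lam η) * χhi f μ η) := by
          simp only [Finset.mul_sum, Finset.sum_mul]
          refine Finset.sum_congr rfl fun μ _ => ?_
          rw [rot5, rot5, rot3]
          exact Finset.sum_congr rfl fun _ _ => Finset.sum_congr rfl fun _ _ =>
            Finset.sum_congr rfl fun _ _ => Finset.sum_congr rfl fun _ _ =>
            Finset.sum_congr rfl fun _ _ => by ring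
      _ = ∑ μ, ∑ ρ2, ∑ lam2, ∑ η, (χlo a μ ρ2 * χhi b lam2 ρ2) *
            ((∑ q, C c e d q * χlo q lam2 η) * χhi f μ η) := by
          simp only [← hclos2]
      _ = ∑ q, C c e d q * ((g:ℂ) * C a q b f) := by
          simp only [hformg]
          simp only [Finset.mul_sum, Finset.sum_mul]
          rw [show (∑ q, ∑ μ, ∑ ρ2, ∑ lam2, ∑ η, C c e d q *
              (χlo a μ ρ2 * χhi b lam2 ρ2 * χlo q lam2 η * χhi f μ η))
            = ∑ μ, ∑ ρ2, ∑ lam2, ∑ η, ∑ q, C c e d q *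
              (χlo a μ ρ2 * χhi b lam2 ρ2 * χlo q lam2 η * χhi f μ η) from rot5 _]
          exact Finset.sum_congr rfl fun _ _ => Finset.sum_congr rfl fun _ _ =>
            Finset.sum_congr rfl fun _ _ => Finset.sum_congr rfl fun _ _ =>
            Finset.sum_congr rfl fun _ _ => by ring
      _ = (g:ℂ) * ∑ q, C c e d q * C a q b f := by
          rw [Finset.mul_sum]; exact Finset.sum_congr rfl fun q _ => by ring
  intro i j k m n p
  calc ∑ l, C i k j l * C l n m p
      = ∑ l, C k i j l * C l n m p :=
        Finset.sum_congr rfl fun l _ => by rw [(hsym i j k l).1]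
    _ = ∑ q, C i n m q * C k q j p := key k j i m n p
    _ = ∑ q, C i n m q * C q k j p :=
        Finset.sum_congr rfl fun q _ => by rw [(hsym k j q p).1]
    _ = ∑ q, C i n m q * C q k p j :=
        Finset.sum_congr rfl fun q _ => by rw [(hsym q j k p).2]
    _ = ∑ q, C n k p q * C i q m j := key i m n p k j
    _ = ∑ q, C n k p q * C q i m j :=
        Finset.sum_congr rfl fun q _ => by rw [(hsym i m q j).1]
end

section
/- Let 𝒮† and B be operators with [𝒮, 𝒮†] = 1 − 𝒩_F/Ω, where 𝒩_F commutes with B and 𝒮† raises 𝒩_F by 2, and define C_F = 𝒮†𝒮. Then the operator identity C_F 𝒮†B = 𝒮†B (C_F + 1 − 𝒩_F/Ω) holds; consequently, for an eigenvector |ψ⟩ of C_F with eigenvalue λ containing n_F ideal fermions, C_F (𝒮†B)^k |ψ⟩ = [λ + (k/Ω)(Ω − n_F − k + 1)] (𝒮†B)^k |ψ⟩ for all k ≥ 0. -/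
/-- The operator identity C_F 𝒮†B = 𝒮†B (C_F + 1 − 𝒩_F/Ω), and its consequence:
(𝒮†B)^k maps a (λ, n_F) simultaneous eigenvector of C_F, 𝒩_F to a C_F-eigenvector
with eigenvalue λ + (k/Ω)(Ω − n_F − k + 1). -/
theorem stmt14 {V : Type*} [AddCommGroup V] [Module ℂ V]
    (Ω : ℕ) (hΩ : 0 < Ω)
    (S Sd B NF : Module.End ℂ V)
    (hcom : S * Sd - Sd * S = 1 - ((Ω : ℂ))⁻¹ • NF)
    (hNB : NF * B = B * NF)
    (hSB : S * B = B * S) (hSdB : Sd * B = B * Sd)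
    (hNSd : NF * Sd - Sd * NF = (2 : ℂ) • Sd) :
    ((Sd * S) * (Sd * B) = (Sd * B) * ((Sd * S) + 1 - ((Ω : ℂ))⁻¹ • NF)) ∧
    ∀ (ψ : V) (lam : ℂ) (nF : ℕ),
      (Sd * S) ψ = lam • ψ → NF ψ = (nF : ℂ) • ψ →
      ∀ k : ℕ, (Sd * S) (((Sd * B) ^ k) ψ)
        = (lam + (k : ℂ) / (Ω : ℂ) * ((Ω : ℂ) - (nF : ℂ) - (k : ℂ) + 1)) •
            ((Sd * B) ^ k) ψ := by
  have hΩ' : (Ω : ℂ) ≠ 0 := Nat.cast_ne_zero.2 hΩ.ne'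
  have hkey : (Sd * S) * (Sd * B) = (Sd * B) * ((Sd * S) + 1 - ((Ω : ℂ))⁻¹ • NF) := by
    linear_combination (norm := noncomm_ring)
      Sd * hcom * B - ((Ω:ℂ))⁻¹ • (Sd * hNB) + Sd * Sd * hSB + Sd * hSdB * S
  have hNkey : NF * (Sd * B) = (Sd * B) * NF + (2 : ℂ) • (Sd * B) := by
    linear_combination (norm := noncomm_ring) hNSd * B + Sd * hNB
  refine ⟨hkey, fun ψ lam nF hC hN k => ?_⟩
  have main : ∀ k : ℕ,
      NF (((Sd * B) ^ k) ψ) = ((nF : ℂ) + 2 * k) • ((Sd * B) ^ k) ψ ∧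
      (Sd * S) (((Sd * B) ^ k) ψ)
        = (lam + (k : ℂ) / (Ω : ℂ) * ((Ω : ℂ) - (nF : ℂ) - (k : ℂ) + 1)) •
            ((Sd * B) ^ k) ψ := by
    intro k
    induction k with
    | zero => simpa using ⟨hN, hC⟩
    | succ k ih =>
      obtain ⟨ihN, ihC⟩ := ih
      set φ := ((Sd * B) ^ k) ψ with hφdef
      have hφ : ((Sd * B) ^ (k + 1)) ψ = (Sd * B) φ := by
        rw [pow_succ' (Sd * B) k]; rfl
      constructor
      · have h2 : NF ((Sd * B) φ) = (Sd * B) (NF φ) + (2 : ℂ) • (Sd * B) φ := by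
          have := congrArg (fun f : Module.End ℂ V => f φ) hNkey
          simpa [Module.End.mul_apply] using this
        rw [hφ, h2, ihN, map_smul]
        match_scalars
        ring
      · have h2 : (Sd * S) ((Sd * B) φ)
            = (Sd * B) ((Sd * S) φ) + (Sd * B) φ - (Ω : ℂ)⁻¹ • (Sd * B) (NF φ) := by
          have := congrArg (fun f : Module.End ℂ V => f φ) hkey
          simpa [Module.End.mul_apply, map_add, map_sub, map_smul] using this
        rw [hφ, h2, ihC, ihN, map_smul, map_smul]
        match_scalars
        field_simp
        ring
  exact (main k).2
end

section
/- (Eigenstate ansatz for the strong-coupling effective operator) Let K_eff = Σ_ν ε_ν α_ν†α_ν − (2/(Ω−2s+2)) Σ_{μ,ν} ε_ν β_μ† β_ν act on the space of 2s ideal fermions with no singly occupied levels. If complex numbers η_1,…,η_s (all nonzero and distinct from all 2ε_ρ and from each other) satisfy 0 = Σ_{ρ=1/2}^{j} 1/(η_k − 2ε_ρ) + 2 Σ_{l≠k} 1/(η_l − η_k) for k = 1,…,s, then the state |ψ⟩ = ∏_{k=1}^{s} (Σ_{ρ} β_ρ†/(2ε_ρ − η_k)) |0⟩ satisfies K_eff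 |ψ⟩ = (Σ_{k=1}^s η_k) |ψ⟩. -/
/-!
The pair creators `β_ρ†` commute with each other, and the one-body operator `K₀ = Σ ε_ν n_ν` shifts
each of them by `2ε_ρ`, so the collective operator `B(z) = Σ_ρ β_ρ† / (2ε_ρ - z)` satisfies
`[K₀, B(z)] = z B(z) + Σ_ρ β_ρ†`. Pushing `K₀` through `|ψ⟩ = ∏_k B(η_k)|0⟩` therefore gives
`(Σ_k η_k)|ψ⟩` plus `Σ_k (Σ_ρ β_ρ†)|ψ_k⟩`, where `ψ_k` omits the `k`-th factor.

The pairing term produces the same unwanted states. With `N_ν = n_ν + n_{-ν}`, the relations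
`[β_ν, B(z)] = (1 - N_ν) / (2ε_ν - z)` and `[N_ν, B(z)] = 2β_ν† / (2ε_ν - z)` give `β_ν|ψ⟩` as a
sum over one and two omitted factors; a partial-fraction identity collapses the double sums, and the
coefficient of `Σ_ρ β_ρ†|ψ_k⟩` becomes `Σ_ρ ε_ρ / (2ε_ρ - η_k) - Σ_{l ≠ k} η_l / (η_l - η_k)`.
The Richardson equations make this `(Ω - 2s + 2) / 2` for every `k`, which the prefactor
`2 / (Ω - 2s + 2)` of the pairing term cancels exactly.
-/

open Finset

section Anticommutation

variable {R : Type*} [Ring R]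

theorem mul_mul_eq_anticomm_sub (x A B : R) :
    x * (A * B) = (x * A + A * x) * B - A * (x * B + B * x) + A * B * x := by
  noncomm_ring

theorem commute_mul_of_anticomm {x A B : R} (hA : x * A + A * x = 0)
    (hB : x * B + B * x = 0) : Commute x (A * B) := by
  rw [Commute, SemiconjBy, mul_mul_eq_anticomm_sub, hA, hB]
  simp [mul_assoc]

theorem pair_mul_pair_eq_of_anticomm {x y A B : R} (hxA : x * A + A * x = 1)
    (hxB : x * B + B * x = 0) (hyA : y * A + A * y = 0) (hyB : y * B + B * y = 1) :
    y * x * (A * B) = A * B * (y * x) + 1 - A * x - B * y := by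
  have hx : x * (A * B) = B + A * B * x := by
    rw [mul_mul_eq_anticomm_sub, hxA, hxB]; noncomm_ring
  have hy : y * (A * B) = -A + A * B * y := by
    rw [mul_mul_eq_anticomm_sub, hyA, hyB]; noncomm_ring
  calc y * x * (A * B) = y * B + y * (A * B) * x := by rw [mul_assoc, hx]; noncomm_ring
    _ = A * B * (y * x) + 1 - A * x - B * y := by
      rw [hy, eq_sub_of_add_eq hyB]; noncomm_ring

end Anticommutation

section Ladder

variable {𝕜 R : Type*} [CommRing 𝕜] [Ring R] [Algebra 𝕜 R]

theorem mul_mul_eq_of_ladder {T x y : R} {α β : 𝕜} (hx : T * x = x * T + α • x)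
    (hy : T * y = y * T + β • y) : T * (x * y) = x * y * T + (α + β) • (x * y) := by
  rw [← mul_assoc, hx, add_mul, mul_assoc, hy]
  simp only [mul_add, add_smul, smul_mul_assoc, mul_smul_comm, mul_assoc]
  abel

end Ladder

section Fermions

variable {𝕜 R : Type*} [CommRing 𝕜] [Ring R] [Algebra 𝕜 R] {I : Type*} {adag a : I → R}

def oneBodyOp [Fintype I] (adag a : I → R) (w : I → 𝕜) : R := ∑ μ, w μ • (adag μ * a μ)

theorem number_mul_creator [DecidableEq I]
    (car1 : ∀ μ ν, a μ * adag ν + adag ν * a μ = if μ = ν then 1 else 0)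
    (car3 : ∀ μ ν, adag μ * adag ν + adag ν * adag μ = 0) (μ ν : I) :
    adag μ * a μ * adag ν = adag ν * (adag μ * a μ) + (if μ = ν then (1 : 𝕜) else 0) • adag ν := by
  rw [mul_assoc, eq_sub_of_add_eq (car1 μ ν), mul_sub, ← mul_assoc,
    eq_neg_of_add_eq_zero_left (car3 μ ν)]
  split_ifs with h
  · subst h; simp [mul_assoc, add_comm]
  · simp [mul_assoc]

theorem oneBodyOp_mul_creator [Fintype I] [DecidableEq I]
    (car1 : ∀ μ ν, a μ * adag ν + adag ν * a μ = if μ = ν then 1 else 0)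
    (car3 : ∀ μ ν, adag μ * adag ν + adag ν * adag μ = 0) (w : I → 𝕜) (ν : I) :
    oneBodyOp adag a w * adag ν = adag ν * oneBodyOp adag a w + w ν • adag ν := by
  simp only [oneBodyOp, sum_mul, mul_sum, smul_mul_assoc, mul_smul_comm,
    number_mul_creator (𝕜 := 𝕜) car1 car3, smul_add, sum_add_distrib, ite_smul, one_smul,
    zero_smul, smul_ite, smul_zero, sum_ite_eq', mem_univ, if_true]

theorem oneBodyOp_mul_pair [Fintype I] [DecidableEq I]
    (car1 : ∀ μ ν, a μ * adag ν + adag ν * a μ = if μ = ν then 1 else 0)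
    (car3 : ∀ μ ν, adag μ * adag ν + adag ν * adag μ = 0) (w : I → 𝕜) (i j : I) :
    oneBodyOp adag a w * (adag i * adag j)
      = adag i * adag j * oneBodyOp adag a w + (w i + w j) • (adag i * adag j) :=
  mul_mul_eq_of_ladder (oneBodyOp_mul_creator car1 car3 w i) (oneBodyOp_mul_creator car1 car3 w j)

theorem commute_creator_mul_creator (car3 : ∀ μ ν, adag μ * adag ν + adag ν * adag μ = 0) (i j k l : I) :
    Commute (adag i * adag j) (adag k * adag l) :=
  (commute_mul_of_anticomm (car3 i k) (car3 i l)).mul_left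
    (commute_mul_of_anticomm (car3 j k) (car3 j l))

end Fermions

section PairOperators

variable {𝕜 R I : Type*} [CommRing 𝕜] [Ring R] [Algebra 𝕜 R] (adag a : I → R) (neg : I → I)
  (sgn : I → 𝕜)

def pairCreator (i : I) : R := sgn i • (adag i * adag (neg i))

def pairAnnihilator (i : I) : R := sgn i • (a (neg i) * a i)

def pairNumber (i : I) : R := adag i * a i + adag (neg i) * a (neg i)

variable {adag a neg sgn}

theorem commute_pairCreator (car3 : ∀ μ ν, adag μ * adag ν + adag ν * adag μ = 0) (i j : I) :
    Commute (pairCreator adag neg sgn i) (pairCreator adag neg sgn j) :=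
  ((commute_creator_mul_creator car3 _ _ _ _).smul_left _).smul_right _

variable [DecidableEq I]

theorem oneBodyOp_mul_pairCreator [Fintype I]
    (car1 : ∀ μ ν, a μ * adag ν + adag ν * a μ = if μ = ν then 1 else 0)
    (car3 : ∀ μ ν, adag μ * adag ν + adag ν * adag μ = 0) {w : I → 𝕜} (i : I)
    (hw : w (neg i) = w i) :
    oneBodyOp adag a w * pairCreator adag neg sgn i
      = pairCreator adag neg sgn i * oneBodyOp adag a w
        + (2 * w i) • pairCreator adag neg sgn i := by
  rw [pairCreator, mul_smul_comm, oneBodyOp_mul_pair car1 car3, hw, smul_add, smul_mul_assoc,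
    smul_comm, two_mul]

theorem pairNumber_mul_creator
    (car1 : ∀ μ ν, a μ * adag ν + adag ν * a μ = if μ = ν then 1 else 0)
    (car3 : ∀ μ ν, adag μ * adag ν + adag ν * adag μ = 0) (i μ : I) :
    pairNumber adag a neg i * adag μ = adag μ * pairNumber adag a neg i
      + ((if i = μ then 1 else 0) + (if neg i = μ then 1 else 0) : 𝕜) • adag μ := by
  rw [pairNumber, add_mul, number_mul_creator (𝕜 := 𝕜) car1 car3,
    number_mul_creator (𝕜 := 𝕜) car1 car3, mul_add, add_smul]
  abel

theorem pairNumber_mul_pairCreator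
    (car1 : ∀ μ ν, a μ * adag ν + adag ν * a μ = if μ = ν then 1 else 0)
    (car3 : ∀ μ ν, adag μ * adag ν + adag ν * adag μ = 0) (i j : I) :
    pairNumber adag a neg i * pairCreator adag neg sgn j
      = pairCreator adag neg sgn j * pairNumber adag a neg i
      + ((if i = j then 1 else 0) + (if neg i = j then 1 else 0)
        + ((if i = neg j then 1 else 0) + (if neg i = neg j then 1 else 0)) : 𝕜) •
          pairCreator adag neg sgn j := by
  rw [pairCreator, mul_smul_comm, mul_mul_eq_of_ladder
    (pairNumber_mul_creator (𝕜 := 𝕜) car1 car3 i j) (pairNumber_mul_creator car1 car3 i (neg j)),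
    smul_add, smul_mul_assoc, smul_comm]

theorem pairAnnihilator_mul_pairCreator_self
    (car1 : ∀ μ ν, a μ * adag ν + adag ν * a μ = if μ = ν then 1 else 0) {i : I}
    (hi : neg i ≠ i) (hsgn : sgn i * sgn i = 1) :
    pairAnnihilator a neg sgn i * pairCreator adag neg sgn i
      = pairCreator adag neg sgn i * pairAnnihilator a neg sgn i
        + (1 - pairNumber adag a neg i) := by
  have h := pair_mul_pair_eq_of_anticomm (by simpa using car1 i i)
    (by simpa [hi.symm] using car1 i (neg i)) (by simpa [hi] using car1 (neg i) i)
    (by simpa using car1 (neg i) (neg i))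
  rw [pairAnnihilator, pairCreator, pairNumber, smul_mul_smul_comm, smul_mul_smul_comm, hsgn,
    one_smul, one_smul, h]
  abel

theorem commute_pairAnnihilator_pairCreator
    (car1 : ∀ μ ν, a μ * adag ν + adag ν * a μ = if μ = ν then 1 else 0) {i j : I}
    (hij : i ≠ j ∧ i ≠ neg j ∧ neg i ≠ j ∧ neg i ≠ neg j) :
    Commute (pairAnnihilator a neg sgn i) (pairCreator adag neg sgn j) := by
  obtain ⟨h₁, h₂, h₃, h₄⟩ := hij
  refine ((Commute.mul_left ?_ ?_).smul_left _).smul_right _ <;>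
    refine commute_mul_of_anticomm ?_ ?_ <;> simp [car1, h₁, h₂, h₃, h₄]

end PairOperators

section Levels

variable {𝕜 R I J : Type*} [CommRing 𝕜] [Ring R] [Algebra 𝕜 R] {adag a : I → R} {neg : I → I}
  {sgn : I → 𝕜} {ι : J → I}

theorem levels_disjoint (hneg : ∀ i, neg (neg i) = i) (hι : Function.Injective ι)
    (hrep : ∀ p q, ι p ≠ neg (ι q)) {ν ρ : J} (h : ν ≠ ρ) :
    ι ν ≠ ι ρ ∧ ι ν ≠ neg (ι ρ) ∧ neg (ι ν) ≠ ι ρ ∧ neg (ι ν) ≠ neg (ι ρ) :=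
  ⟨hι.ne h, hrep ν ρ, fun e => hrep ρ ν e.symm,
    fun e => hι.ne h (Function.LeftInverse.injective hneg e)⟩

variable [DecidableEq I] [DecidableEq J]

theorem pairAnnihilator_mul_pairCreator_ite
    (car1 : ∀ μ ν, a μ * adag ν + adag ν * a μ = if μ = ν then 1 else 0)
    (hneg : ∀ i, neg (neg i) = i) (hnfix : ∀ i, neg i ≠ i) (hι : Function.Injective ι)
    (hrep : ∀ p q, ι p ≠ neg (ι q)) (hsgn : ∀ i, sgn i * sgn i = 1) (ν ρ : J) :
    pairAnnihilator a neg sgn (ι ν) * pairCreator adag neg sgn (ι ρ)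
      = pairCreator adag neg sgn (ι ρ) * pairAnnihilator a neg sgn (ι ν)
        + if ν = ρ then 1 - pairNumber adag a neg (ι ν) else 0 := by
  split_ifs with h
  · subst h
    exact pairAnnihilator_mul_pairCreator_self car1 (hnfix _) (hsgn _)
  · rw [add_zero]
    exact commute_pairAnnihilator_pairCreator car1 (levels_disjoint hneg hι hrep h)

theorem pairNumber_mul_pairCreator_ite
    (car1 : ∀ μ ν, a μ * adag ν + adag ν * a μ = if μ = ν then 1 else 0)
    (car3 : ∀ μ ν, adag μ * adag ν + adag ν * adag μ = 0)
    (hneg : ∀ i, neg (neg i) = i) (hnfix : ∀ i, neg i ≠ i) (hι : Function.Injective ι)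
    (hrep : ∀ p q, ι p ≠ neg (ι q)) (ν ρ : J) :
    pairNumber adag a neg (ι ν) * pairCreator adag neg sgn (ι ρ)
      = pairCreator adag neg sgn (ι ρ) * pairNumber adag a neg (ι ν)
        + if ν = ρ then (2 : 𝕜) • pairCreator adag neg sgn (ι ν) else 0 := by
  rw [pairNumber_mul_pairCreator car1 car3]
  by_cases h : ν = ρ
  · subst h
    simp [hnfix, (hnfix _).symm, one_add_one_eq_two]
  · obtain ⟨h₁, h₂, h₃, h₄⟩ := levels_disjoint hneg hι hrep h
    simp [h, h₁, h₂, h₃, h₄]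

end Levels

theorem Finset.sum_erase_insert_eq {κ M : Type*} [DecidableEq κ] [AddCommMonoid M] {a : κ}
    {S : Finset κ} (ha : a ∉ S) (f : κ → Finset κ → M) :
    ∑ k ∈ insert a S, f k ((insert a S).erase k) = f a S + ∑ k ∈ S, f k (insert a (S.erase k)) := by
  rw [sum_insert ha, erase_insert ha]
  congr 1
  exact sum_congr rfl fun k hk => by rw [erase_insert_of_ne (ne_of_mem_of_not_mem hk ha).symm]

theorem sum_sum_erase_smul_sub_smul {κ M : Type*} [Fintype κ] [DecidableEq κ] [AddCommGroup M]
    [Module ℂ M] (η : κ → ℂ) (f : κ → M) :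
    ∑ k, ∑ l ∈ univ.erase k, (2 * (η k - η l))⁻¹ • (η k • f l - η l • f k)
      = ∑ k, (∑ l ∈ univ.erase k, η l / (η l - η k)) • f k := by
  have hswap : ∑ k, ∑ l ∈ univ.erase k, (2 * (η k - η l))⁻¹ • η k • f l
      = ∑ k, ∑ l ∈ univ.erase k, (2 * (η l - η k))⁻¹ • η l • f k :=
    sum_comm' fun k l => by simp [and_comm, eq_comm]
  simp only [smul_sub, sum_sub_distrib]
  rw [hswap, ← sum_sub_distrib]
  refine sum_congr rfl fun k _ => ?_
  rw [← sum_sub_distrib, sum_smul]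
  refine sum_congr rfl fun l _ => ?_
  rw [smul_smul, smul_smul, ← sub_smul, show η k - η l = -(η l - η k) by ring]
  congr 1
  simp only [mul_neg, inv_neg, mul_inv]
  ring

section ProductState

variable {V : Type*} [AddCommGroup V] [Module ℂ V] {κ : Type*}
  (B : κ → Module.End ℂ V) (hB : ∀ k l, Commute (B k) (B l)) (v : V)

def productState (S : Finset κ) : V :=
  S.noncommProd B (fun k _ l _ _ => hB k l) v

@[simp]
theorem productState_empty : productState B hB v ∅ = v := rfl

variable [DecidableEq κ]

theorem productState_insert {a : κ} {S : Finset κ} (ha : a ∉ S) :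
    productState B hB v (insert a S) = B a (productState B hB v S) :=
  LinearMap.congr_fun (noncommProd_insert_of_notMem _ _ _ _ ha) v

theorem productState_insert_erase {a k : κ} {S : Finset κ} (ha : a ∉ S) :
    productState B hB v (insert a (S.erase k)) = B a (productState B hB v (S.erase k)) :=
  productState_insert B hB v fun h => ha (mem_of_mem_erase h)

theorem apply_productState_of_mul_eq (T : Module.End ℂ V) (A : κ → Module.End ℂ V) (η : κ → ℂ)
    (hA : ∀ k l, Commute (A k) (B l)) (hT : ∀ k, T * B k = B k * T + A k + η k • B k)
    (hTv : T v = 0) (S : Finset κ) :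
    T (productState B hB v S) = (∑ k ∈ S, η k) • productState B hB v S
      + ∑ k ∈ S, A k (productState B hB v (S.erase k)) := by
  induction S using Finset.induction_on with
  | empty => simp [hTv]
  | @insert a S ha ih =>
    have hTa := LinearMap.congr_fun (hT a) (productState B hB v S)
    simp only [Module.End.mul_apply, LinearMap.add_apply, LinearMap.smul_apply] at hTa
    rw [sum_erase_insert_eq ha fun k U => A k (productState B hB v U),
      productState_insert B hB v ha, hTa, ih, sum_insert ha]
    have hAB : ∀ k w, A k (B a w) = B a (A k w) := fun k => LinearMap.congr_fun (hA k a).eq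
    simp only [productState_insert_erase B hB v ha, hAB, map_add, map_smul, map_sum, add_smul]
    abel

theorem apply_productState_of_mul_eq_smul_one_sub (b N X : Module.End ℂ V) (d : κ → ℂ)
    (hX : ∀ l, Commute X (B l)) (hb : ∀ k, b * B k = B k * b + d k • (1 - N))
    (hN : ∀ k, N * B k = B k * N + (2 * d k) • X) (hbv : b v = 0) (hNv : N v = 0)
    (S : Finset κ) :
    b (productState B hB v S) = ∑ k ∈ S, d k • productState B hB v (S.erase k)
      - ∑ k ∈ S, ∑ l ∈ S.erase k, (d k * d l) • X (productState B hB v ((S.erase k).erase l)) := by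
  induction S using Finset.induction_on with
  | empty => simp [hbv]
  | @insert a S ha ih =>
    have hNS : N (productState B hB v S)
        = ∑ k ∈ S, (2 * d k) • X (productState B hB v (S.erase k)) := by
      simpa using apply_productState_of_mul_eq B hB v N (fun k => (2 * d k) • X) 0
        (fun k l => (hX l).smul_left _) (fun k => by simp [hN]) hNv S
    have hba := LinearMap.congr_fun (hb a) (productState B hB v S)
    simp only [Module.End.mul_apply, LinearMap.add_apply, LinearMap.smul_apply,
      LinearMap.sub_apply, Module.End.one_apply] at hba
    have hXa : ∀ w, X (B a w) = B a (X w) := LinearMap.congr_fun (hX a).eq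
    have hinner : ∀ k ∈ S, ∑ l ∈ (insert a (S.erase k)), (d k * d l) •
          X (productState B hB v ((insert a (S.erase k)).erase l))
        = (d k * d a) • X (productState B hB v (S.erase k)) + ∑ l ∈ S.erase k,
          B a ((d k * d l) • X (productState B hB v ((S.erase k).erase l))) := by
      intro k _
      have ha' : a ∉ S.erase k := fun h => ha (mem_of_mem_erase h)
      rw [sum_erase_insert_eq ha' fun l U => (d k * d l) • X (productState B hB v U)]
      simp only [productState_insert_erase B hB v ha', hXa, map_smul]
    have hsplit : d a • ∑ k ∈ S, (2 * d k) • X (productState B hB v (S.erase k))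
        = ∑ k ∈ S, (d a * d k) • X (productState B hB v (S.erase k))
          + ∑ k ∈ S, (d k * d a) • X (productState B hB v (S.erase k)) := by
      rw [smul_sum, ← sum_add_distrib]
      exact sum_congr rfl fun k _ => by rw [smul_smul, ← add_smul]; ring_nf
    rw [productState_insert B hB v ha, hba, ih, hNS, smul_sub, hsplit,
      sum_erase_insert_eq ha fun k U => d k • productState B hB v U,
      sum_erase_insert_eq ha fun k U => ∑ l ∈ U, (d k * d l) • X (productState B hB v (U.erase l)),
      sum_congr rfl hinner]
    simp only [productState_insert_erase B hB v ha, map_sub, map_sum, map_smul, sum_add_distrib]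
    abel

end ProductState

theorem List.prod_ofFn_apply_eq_productState {V : Type*} [AddCommGroup V] [Module ℂ V] {s : ℕ}
    (B : Fin s → Module.End ℂ V) (hB : ∀ k l, Commute (B k) (B l)) (v : V) :
    (List.ofFn B).prod v = productState B hB v univ := by
  simp [productState, noncommProd, Multiset.noncommProd_coe]

theorem mul_inv_sub_mul_inv_sub {e a b : ℂ} (ha : a ≠ 2 * e) (hb : b ≠ 2 * e) (hab : a ≠ b) :
    e * ((2 * e - a)⁻¹ * (2 * e - b)⁻¹)
      = (a * (2 * e - a)⁻¹ - b * (2 * e - b)⁻¹) / (2 * (a - b)) := by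
  have hx := mul_inv_cancel₀ (sub_ne_zero.mpr ha.symm)
  have hy := mul_inv_cancel₀ (sub_ne_zero.mpr hb.symm)
  have hz := mul_inv_cancel₀ (mul_ne_zero two_ne_zero (sub_ne_zero.mpr hab))
  linear_combination (-e * (2 * e - a)⁻¹ * (2 * e - b)⁻¹) * hz
    + ((2 * (a - b))⁻¹ * a * (2 * e - a)⁻¹) * hy - ((2 * (a - b))⁻¹ * b * (2 * e - b)⁻¹) * hx

theorem richardson_weight {J κ : Type*} [Fintype J] [Fintype κ] [DecidableEq κ] (ε : J → ℂ)
    (η : κ → ℂ) (hηε : ∀ k ρ, η k ≠ 2 * ε ρ) (hη : Function.Injective η) (k : κ)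
    (hRich : (∑ ρ, 1 / (η k - 2 * ε ρ)) + 2 * ∑ l ∈ univ.erase k, 1 / (η l - η k) = 0) :
    ∑ ρ, ε ρ * (2 * ε ρ - η k)⁻¹ - ∑ l ∈ univ.erase k, η l / (η l - η k)
      = ((Fintype.card J : ℂ) - 2 * Fintype.card κ + 2) / 2 := by
  have hRich' : ∑ ρ, (2 * ε ρ - η k)⁻¹ = 2 * ∑ l ∈ univ.erase k, (η l - η k)⁻¹ := by
    simp only [one_div, ← neg_sub (2 * ε _), inv_neg, sum_neg_distrib] at hRich
    linear_combination -hRich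
  have hlevel : ∀ ρ, ε ρ * (2 * ε ρ - η k)⁻¹ = 1 / 2 + η k / 2 * (2 * ε ρ - η k)⁻¹ := fun ρ => by
    linear_combination (1 / 2 : ℂ) * mul_inv_cancel₀ (sub_ne_zero.mpr (hηε k ρ).symm)
  have hpair : ∀ l ∈ univ.erase k, η l / (η l - η k) = 1 + η k * (η l - η k)⁻¹ :=
    fun l hl => by
      linear_combination mul_inv_cancel₀ (sub_ne_zero.mpr (hη.ne (ne_of_mem_erase hl)))
  have hcard : ((univ.erase k).card : ℂ) = Fintype.card κ - 1 := by
    rw [eq_sub_iff_add_eq, ← Nat.cast_add_one, card_erase_add_one (mem_univ k), card_univ]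
  rw [sum_congr rfl fun ρ _ => hlevel ρ, sum_congr rfl hpair, sum_add_distrib, sum_add_distrib,
    sum_const, sum_const, card_univ, ← mul_sum, ← mul_sum, hRich']
  simp only [nsmul_eq_mul, mul_one, hcard]
  ring

section CollectivePair

variable {V : Type*} [AddCommGroup V] [Module ℂ V] {J : Type*} [Fintype J]
  (bd : J → Module.End ℂ V) (ε : J → ℂ)

noncomputable def collectivePair (z : ℂ) : Module.End ℂ V := ∑ ρ, (2 * ε ρ - z)⁻¹ • bd ρ

theorem collectivePair_apply (z : ℂ) (w : V) :
    collectivePair bd ε z w = ∑ ρ, (2 * ε ρ - z)⁻¹ • bd ρ w := by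
  simp [collectivePair]

variable {bd}

theorem commute_collectivePair_right (hbd : ∀ ρ σ, Commute (bd ρ) (bd σ)) (ρ : J) (z : ℂ) :
    Commute (bd ρ) (collectivePair bd ε z) :=
  Commute.sum_right _ _ _ fun σ _ => (hbd ρ σ).smul_right _

theorem commute_collectivePair (hbd : ∀ ρ σ, Commute (bd ρ) (bd σ)) (z z' : ℂ) :
    Commute (collectivePair bd ε z) (collectivePair bd ε z') :=
  Commute.sum_left _ _ _ fun ρ _ => (commute_collectivePair_right ε hbd ρ z').smul_left _

theorem mul_collectivePair_of_ladder {T : Module.End ℂ V}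
    (hT : ∀ ρ, T * bd ρ = bd ρ * T + (2 * ε ρ) • bd ρ) {z : ℂ} (hz : ∀ ρ, z ≠ 2 * ε ρ) :
    T * collectivePair bd ε z
      = collectivePair bd ε z * T + ∑ ρ, bd ρ + z • collectivePair bd ε z := by
  simp only [collectivePair, mul_sum, sum_mul, mul_smul_comm, smul_mul_assoc, hT, smul_add,
    smul_smul, smul_sum, ← sum_add_distrib]
  refine sum_congr rfl fun ρ _ => ?_
  have h : (2 * ε ρ - z)⁻¹ * (2 * ε ρ) = 1 + z * (2 * ε ρ - z)⁻¹ := by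
    linear_combination mul_inv_cancel₀ (sub_ne_zero.mpr (hz ρ).symm)
  rw [h, add_smul, one_smul]
  abel

theorem mul_collectivePair_of_mul_eq_ite [DecidableEq J] {X Y : Module.End ℂ V} {ν : J}
    (hX : ∀ ρ, X * bd ρ = bd ρ * X + if ν = ρ then Y else 0) (z : ℂ) :
    X * collectivePair bd ε z = collectivePair bd ε z * X + (2 * ε ν - z)⁻¹ • Y := by
  simp only [collectivePair, mul_sum, sum_mul, mul_smul_comm, smul_mul_assoc, hX, smul_add,
    sum_add_distrib, smul_ite, smul_zero, sum_ite_eq, mem_univ, if_true]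

end CollectivePair

section RichardsonAnsatz

variable {V : Type*} [AddCommGroup V] [Module ℂ V] {J κ : Type*} [Fintype J]
  {bd : J → Module.End ℂ V} (hbd : ∀ ρ σ, Commute (bd ρ) (bd σ)) (ε : J → ℂ) (η : κ → ℂ) (v : V)

noncomputable def richardsonState (S : Finset κ) : V :=
  productState (fun k => collectivePair bd ε (η k))
    (fun k l => commute_collectivePair ε hbd (η k) (η l)) v S

variable {ε η} [DecidableEq κ]

theorem richardsonState_insert {k : κ} {S : Finset κ} (hk : k ∉ S) :
    richardsonState hbd ε η v (insert k S)
      = collectivePair bd ε (η k) (richardsonState hbd ε η v S) :=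
  productState_insert _ _ v hk

theorem sum_smul_pairCreator_apply_richardsonState (hηε : ∀ k ρ, η k ≠ 2 * ε ρ) {k l : κ} (hkl : η k ≠ η l)
    {S : Finset κ} (hk : k ∉ S) (hl : l ∉ S) :
    ∑ ν, (ε ν * ((2 * ε ν - η k)⁻¹ * (2 * ε ν - η l)⁻¹)) • bd ν (richardsonState hbd ε η v S)
      = (2 * (η k - η l))⁻¹ • (η k • richardsonState hbd ε η v (insert k S)
        - η l • richardsonState hbd ε η v (insert l S)) := by
  simp only [mul_inv_sub_mul_inv_sub (hηε k _) (hηε l _) hkl, richardsonState_insert hbd v hk,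
    richardsonState_insert hbd v hl, collectivePair_apply, smul_sum, ← sum_sub_distrib,
    smul_smul, ← sub_smul]
  refine sum_congr rfl fun ν _ => ?_
  congr 1
  ring

theorem apply_richardsonState_of_ladder {T : Module.End ℂ V}
    (hT : ∀ ρ, T * bd ρ = bd ρ * T + (2 * ε ρ) • bd ρ) (hTv : T v = 0)
    (hηε : ∀ k ρ, η k ≠ 2 * ε ρ) (S : Finset κ) :
    T (richardsonState hbd ε η v S) = (∑ k ∈ S, η k) • richardsonState hbd ε η v S
      + ∑ k ∈ S, (∑ ρ, bd ρ) (richardsonState hbd ε η v (S.erase k)) :=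
  apply_productState_of_mul_eq _ _ v T (fun _ => ∑ ρ, bd ρ) η
    (fun _ _ => Commute.sum_left _ _ _ fun ρ _ => commute_collectivePair_right ε hbd ρ _)
    (fun k => mul_collectivePair_of_ladder ε hT (hηε k)) hTv S

variable [Fintype κ] [DecidableEq J] {bv Nv : J → Module.End ℂ V}

theorem sum_smul_annihilator_apply_richardsonState_univ
    (hb : ∀ ν ρ, bv ν * bd ρ = bd ρ * bv ν + if ν = ρ then 1 - Nv ν else 0)
    (hN : ∀ ν ρ, Nv ν * bd ρ = bd ρ * Nv ν + if ν = ρ then (2 : ℂ) • bd ν else 0)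
    (hbv : ∀ ν, bv ν v = 0) (hNv : ∀ ν, Nv ν v = 0) (hηε : ∀ k ρ, η k ≠ 2 * ε ρ)
    (hη : Function.Injective η) :
    ∑ ν, ε ν • bv ν (richardsonState hbd ε η v univ)
      = ∑ k, (∑ ν, ε ν * (2 * ε ν - η k)⁻¹ - ∑ l ∈ univ.erase k, η l / (η l - η k)) •
          richardsonState hbd ε η v (univ.erase k) := by
  have hbS : ∀ ν, bv ν (richardsonState hbd ε η v univ)
      = ∑ k, (2 * ε ν - η k)⁻¹ • richardsonState hbd ε η v (univ.erase k)
        - ∑ k, ∑ l ∈ univ.erase k, ((2 * ε ν - η k)⁻¹ * (2 * ε ν - η l)⁻¹) •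
            bd ν (richardsonState hbd ε η v ((univ.erase k).erase l)) := fun ν =>
    apply_productState_of_mul_eq_smul_one_sub _ _ v (bv ν) (Nv ν) (bd ν) _
      (fun _ => commute_collectivePair_right ε hbd ν _)
      (fun _ => mul_collectivePair_of_mul_eq_ite ε (hb ν) _)
      (fun _ => by rw [mul_collectivePair_of_mul_eq_ite ε (hN ν), smul_smul, mul_comm])
      (hbv ν) (hNv ν) univ
  have hpairs : ∀ k, ∀ l ∈ univ.erase k,
      ∑ ν, (ε ν * ((2 * ε ν - η k)⁻¹ * (2 * ε ν - η l)⁻¹)) •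
          bd ν (richardsonState hbd ε η v ((univ.erase k).erase l))
        = (2 * (η k - η l))⁻¹ • (η k • richardsonState hbd ε η v (univ.erase l)
          - η l • richardsonState hbd ε η v (univ.erase k)) := by
    intro k l hl
    have hlk := ne_of_mem_erase hl
    rw [sum_smul_pairCreator_apply_richardsonState hbd v hηε (hη.ne hlk.symm) (by simp) (by simp),
      insert_erase hl, erase_right_comm,
      insert_erase (mem_erase_of_ne_of_mem hlk.symm (mem_univ k))]
  calc ∑ ν, ε ν • bv ν (richardsonState hbd ε η v univ)
      = ∑ k, (∑ ν, ε ν * (2 * ε ν - η k)⁻¹) • richardsonState hbd ε η v (univ.erase k)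
        - ∑ k, ∑ l ∈ univ.erase k, ∑ ν, (ε ν * ((2 * ε ν - η k)⁻¹ * (2 * ε ν - η l)⁻¹)) •
            bd ν (richardsonState hbd ε η v ((univ.erase k).erase l)) := by
        simp only [hbS, smul_sub, smul_sum, smul_smul, sum_sub_distrib, sum_smul]
        congr 1
        · exact sum_comm
        · rw [sum_comm]
          exact sum_congr rfl fun k _ => sum_comm
    _ = _ := by
        rw [sum_congr rfl fun k _ => sum_congr rfl (hpairs k), sum_sum_erase_smul_sub_smul,
          ← sum_sub_distrib]
        simp only [sub_smul]

theorem pairing_apply_richardsonState_univ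
    (hb : ∀ ν ρ, bv ν * bd ρ = bd ρ * bv ν + if ν = ρ then 1 - Nv ν else 0)
    (hN : ∀ ν ρ, Nv ν * bd ρ = bd ρ * Nv ν + if ν = ρ then (2 : ℂ) • bd ν else 0)
    (hbv : ∀ ν, bv ν v = 0) (hNv : ∀ ν, Nv ν v = 0) (hηε : ∀ k ρ, η k ≠ 2 * ε ρ)
    (hη : Function.Injective η)
    (hRich : ∀ k, (∑ ρ, 1 / (η k - 2 * ε ρ)) + 2 * ∑ l ∈ univ.erase k, 1 / (η l - η k) = 0) :
    (∑ μ, ∑ ν, ε ν • (bd μ * bv ν)) (richardsonState hbd ε η v univ)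
      = (((Fintype.card J : ℂ) - 2 * Fintype.card κ + 2) / 2) •
          ∑ k, (∑ ρ, bd ρ) (richardsonState hbd ε η v (univ.erase k)) := by
  have hbR := sum_smul_annihilator_apply_richardsonState_univ hbd v hb hN hbv hNv hηε hη
  simp only [richardson_weight ε η hηε hη _ (hRich _)] at hbR
  calc (∑ μ, ∑ ν, ε ν • (bd μ * bv ν)) (richardsonState hbd ε η v univ)
      = ∑ μ, bd μ (∑ ν, ε ν • bv ν (richardsonState hbd ε η v univ)) := by
        simp only [LinearMap.sum_apply, LinearMap.smul_apply, Module.End.mul_apply, map_sum,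
          map_smul]
    _ = _ := by
        simp only [hbR, LinearMap.sum_apply, map_sum, map_smul, smul_sum]
        exact sum_comm

theorem richardson_ansatz_eigen {s : ℕ} {T : Module.End ℂ V} {η : Fin s → ℂ}
    (hbd : ∀ ρ σ, Commute (bd ρ) (bd σ))
    (hT : ∀ ρ, T * bd ρ = bd ρ * T + (2 * ε ρ) • bd ρ)
    (hb : ∀ ν ρ, bv ν * bd ρ = bd ρ * bv ν + if ν = ρ then 1 - Nv ν else 0)
    (hN : ∀ ν ρ, Nv ν * bd ρ = bd ρ * Nv ν + if ν = ρ then (2 : ℂ) • bd ν else 0)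
    (hTv : T v = 0) (hbv : ∀ ν, bv ν v = 0) (hNv : ∀ ν, Nv ν v = 0)
    (hηε : ∀ k ρ, η k ≠ 2 * ε ρ) (hη : Function.Injective η)
    (hRich : ∀ k, (∑ ρ, 1 / (η k - 2 * ε ρ)) + 2 * ∑ l ∈ univ.erase k, 1 / (η l - η k) = 0)
    (hdenom : (Fintype.card J : ℂ) - 2 * s + 2 ≠ 0) :
    (T - (2 / ((Fintype.card J : ℂ) - 2 * s + 2)) • ∑ μ, ∑ ν, ε ν • (bd μ * bv ν))
        ((List.ofFn fun k => collectivePair bd ε (η k)).prod v)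
      = (∑ k, η k) • (List.ofFn fun k => collectivePair bd ε (η k)).prod v := by
  rw [List.prod_ofFn_apply_eq_productState _ fun k l => commute_collectivePair ε hbd (η k) (η l)]
  change (T - _) (richardsonState hbd ε η v univ) = _ • richardsonState hbd ε η v univ
  rw [LinearMap.sub_apply, LinearMap.smul_apply, apply_richardsonState_of_ladder hbd v hT hTv hηε,
    pairing_apply_richardsonState_univ hbd v hb hN hbv hNv hηε hη hRich, Fintype.card_fin,
    smul_smul, div_mul_div_cancel₀ hdenom, div_self two_ne_zero, one_smul, add_sub_cancel_right]

end RichardsonAnsatz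

theorem stmt18_general {V : Type*} [AddCommGroup V] [Module ℂ V]
    {I J : Type*} [Fintype I] [Fintype J] [DecidableEq I] [DecidableEq J]
    (Ω : ℕ) (hΩJ : Fintype.card J = Ω)
    (neg : I → I) (hneg : ∀ ν, neg (neg ν) = ν) (hnfix : ∀ ν, neg ν ≠ ν)
    (sgn : I → ℂ) (hsgn : ∀ ν, sgn ν = 1 ∨ sgn ν = -1)
    (adag a : I → Module.End ℂ V)
    (car1 : ∀ μ ν, a μ * adag ν + adag ν * a μ = if μ = ν then 1 else 0)
    (car3 : ∀ μ ν, adag μ * adag ν + adag ν * adag μ = 0)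
    (ι : J → I) (hι : Function.Injective ι)
    (hrep : ∀ p q : J, ι p ≠ neg (ι q))
    (eps : I → ℝ) (hepsneg : ∀ ν, eps (neg ν) = eps ν)
    (v0 : V) (hvac : ∀ ν, a ν v0 = 0)
    (s : ℕ)
    (hdenom : ((Ω : ℂ) - 2 * (s : ℂ) + 2) ≠ 0)
    (η : Fin s → ℂ)
    (hηε : ∀ (k : Fin s) (ρ : J), η k ≠ 2 * (eps (ι ρ) : ℂ))
    (hηdist : Function.Injective η)
    (hRich : ∀ k : Fin s,
      (∑ ρ : J, 1 / (η k - 2 * (eps (ι ρ) : ℂ)))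
        + 2 * ∑ l ∈ Finset.univ.erase k, 1 / (η l - η k) = 0) :
    let bd : J → Module.End ℂ V :=
      fun ρ => sgn (ι ρ) • (adag (ι ρ) * adag (neg (ι ρ)))
    let b : J → Module.End ℂ V :=
      fun ρ => sgn (ι ρ) • (a (neg (ι ρ)) * a (ι ρ))
    let Keff : Module.End ℂ V :=
      (∑ ν : I, (eps ν : ℂ) • (adag ν * a ν))
        - ((2 : ℂ) / ((Ω : ℂ) - 2 * (s : ℂ) + 2)) •
            ∑ μ : J, ∑ ν : J, (eps (ι ν) : ℂ) • (bd μ * b ν)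
    let ψ : V :=
      ((List.ofFn fun k : Fin s =>
        ∑ ρ : J, (2 * (eps (ι ρ) : ℂ) - η k)⁻¹ • bd ρ).prod) v0
    Keff ψ = (∑ k, η k) • ψ := by
  intro bd b Keff ψ
  subst hΩJ
  exact richardson_ansatz_eigen (T := oneBodyOp adag a fun ν => (eps ν : ℂ))
    (bv := fun ν => pairAnnihilator a neg sgn (ι ν)) (Nv := fun ν => pairNumber adag a neg (ι ν))
    v0 (fun ρ σ => commute_pairCreator car3 _ _)
    (fun ρ => oneBodyOp_mul_pairCreator car1 car3 _ (by simp [hepsneg]))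
    (pairAnnihilator_mul_pairCreator_ite car1 hneg hnfix hι hrep
      fun i => mul_self_eq_one_iff.mpr (hsgn i))
    (pairNumber_mul_pairCreator_ite car1 car3 hneg hnfix hι hrep)
    (by simp [oneBodyOp, hvac]) (fun ν => by simp [pairAnnihilator, hvac])
    (fun ν => by simp [pairNumber, hvac]) hηε hηdist hRich hdenom

/-- Eigenstate ansatz for the strong-coupling effective operator K_eff:
if η_1,…,η_s solve the strong-coupling Richardson equations, then
|ψ⟩ = ∏_k (Σ_ρ β_ρ†/(2ε_ρ − η_k)) |0⟩ satisfies K_eff |ψ⟩ = (Σ_k η_k)|ψ⟩. -/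
theorem stmt18 {V : Type*} [AddCommGroup V] [Module ℂ V]
    {I J : Type*} [Fintype I] [Fintype J] [DecidableEq I] [DecidableEq J]
    (Ω : ℕ) (hΩJ : Fintype.card J = Ω) (hΩI : Fintype.card I = 2 * Ω)
    (neg : I → I) (hneg : ∀ ν, neg (neg ν) = ν) (hnfix : ∀ ν, neg ν ≠ ν)
    (sgn : I → ℂ) (hsgn : ∀ ν, sgn ν = 1 ∨ sgn ν = -1)
    (hsgnneg : ∀ ν, sgn (neg ν) = - sgn ν)
    (adag a : I → Module.End ℂ V)
    (car1 : ∀ μ ν, a μ * adag ν + adag ν * a μ = if μ = ν then 1 else 0)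
    (car2 : ∀ μ ν, a μ * a ν + a ν * a μ = 0)
    (car3 : ∀ μ ν, adag μ * adag ν + adag ν * adag μ = 0)
    (ι : J → I) (hι : Function.Injective ι)
    (hrep : ∀ p q : J, ι p ≠ neg (ι q))
    (eps : I → ℝ) (hepsneg : ∀ ν, eps (neg ν) = eps ν)
    (v0 : V) (hvac : ∀ ν, a ν v0 = 0)
    (s : ℕ) (hs : 1 ≤ s)
    (hdenom : ((Ω : ℂ) - 2 * (s : ℂ) + 2) ≠ 0)
    (η : Fin s → ℂ)
    (hη0 : ∀ k, η k ≠ 0)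
    (hηε : ∀ (k : Fin s) (ρ : J), η k ≠ 2 * (eps (ι ρ) : ℂ))
    (hηdist : Function.Injective η)
    (hRich : ∀ k : Fin s,
      (∑ ρ : J, 1 / (η k - 2 * (eps (ι ρ) : ℂ)))
        + 2 * ∑ l ∈ Finset.univ.erase k, 1 / (η l - η k) = 0) :
    let bd : J → Module.End ℂ V :=
      fun ρ => sgn (ι ρ) • (adag (ι ρ) * adag (neg (ι ρ)))
    let b : J → Module.End ℂ V :=
      fun ρ => sgn (ι ρ) • (a (neg (ι ρ)) * a (ι ρ))
    let Keff : Module.End ℂ V :=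
      (∑ ν : I, (eps ν : ℂ) • (adag ν * a ν))
        - ((2 : ℂ) / ((Ω : ℂ) - 2 * (s : ℂ) + 2)) •
            ∑ μ : J, ∑ ν : J, (eps (ι ν) : ℂ) • (bd μ * b ν)
    let ψ : V :=
      ((List.ofFn fun k : Fin s =>
        ∑ ρ : J, (2 * (eps (ι ρ) : ℂ) - η k)⁻¹ • bd ρ).prod) v0
    Keff ψ = (∑ k, η k) • ψ :=
  stmt18_general Ω hΩJ neg hneg hnfix sgn hsgn adag a car1 car3 ι hι hrep eps hepsneg v0 hvac s
    hdenom η hηε hηdist hRich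
end
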